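/- arXiv:1703.00823 — 3 statements merged into one kernel-verified Lean document; each statement's English description precedes it below -/
import Mathlib

section
/- Let d ≥ 2 and let S be the set of rational primes dividing (2d−2)!. Then GR_d^1[2d](ℚ,S)/PGL_2(ℤ_S) is infinite. Indeed, there are infinitely many PGL_2(ℤ_S)-equivalence classes of preperiodic triples (f,X,X) in GR_d^1[2d](ℚ,S). -/
open Polynomial
open scoped Classical

noncomputable section

/-- The projective line over `L`: `L` together with a point at infinity (`none`). -/
abbrev ProjLine (L : Type*) := Option L

namespace ProjLine

variable {L : Type*} [Field L]

/-- Value of the rational map `p/q` at a finite point `x`. -/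
def evalAt (p q : L[X]) (x : L) : ProjLine L :=
  if q.eval x = 0 then none else some (p.eval x / q.eval x)

/-- Value at a point of the projective line of the degree-`d` morphism whose
dehomogenized description is the pair `(p, q)` (i.e. the morphism
`[Y^d·p(X/Y) : Y^d·q(X/Y)]` in homogeneous coordinates). -/
def eval (d : ℕ) (p q : L[X]) : ProjLine L → ProjLine L
  | some x => evalAt p q x
  | none => evalAt (p.reflect d) (q.reflect d) 0

/-- Ramification index of `p/q` at a finite point `x`. -/
def ramAt (p q : L[X]) (x : L) : ℕ :=
  if q.eval x = 0 then rootMultiplicity x q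
  else rootMultiplicity x (C (q.eval x) * p - C (p.eval x) * q)

/-- Ramification index at a point of the projective line of the degree-`d` morphism
with dehomogenized description `(p, q)`. -/
def ram (d : ℕ) (p q : L[X]) : ProjLine L → ℕ
  | some x => ramAt p q x
  | none => ramAt (p.reflect d) (q.reflect d) 0

/-- The Möbius transformation of the projective line attached to a 2×2 matrix. -/
def mobius (M : Matrix (Fin 2) (Fin 2) L) : ProjLine L → ProjLine L
  | some x => if M 1 0 * x + M 1 1 = 0 then none
      else some ((M 0 0 * x + M 0 1) / (M 1 0 * x + M 1 1))
  | none => if M 1 0 = 0 then none else some (M 0 0 / M 1 0)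

/-- The Sylvester matrix of the binary forms of degrees `d` and `e` whose
dehomogenizations are `p` and `q`. -/
def sylvester (d e : ℕ) (p q : L[X]) : Matrix (Fin (e + d)) (Fin (e + d)) L :=
  Matrix.of fun i j =>
    if (i : ℕ) < e then
      (if (i : ℕ) ≤ (j : ℕ) ∧ (j : ℕ) ≤ (i : ℕ) + d then p.coeff (d + (i : ℕ) - (j : ℕ)) else 0)
    else
      (if (i : ℕ) - e ≤ (j : ℕ) ∧ (j : ℕ) ≤ ((i : ℕ) - e) + e then
        q.coeff (e + ((i : ℕ) - e) - (j : ℕ)) else 0)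

/-- The resultant of the binary forms of degrees `d` and `e` whose dehomogenizations
are `p` and `q`, as a Sylvester determinant. -/
def resultant (d e : ℕ) (p q : L[X]) : L := (sylvester d e p q).det

/-- Reduction of a point of the projective line over `L` modulo (the maximal ideal of)
a valuation subring `O` of `L`. -/
def red (O : ValuationSubring L) : ProjLine L → ProjLine (IsLocalRing.ResidueField ↥O)
  | some x => if h : x ∈ O then some (IsLocalRing.residue ↥O ⟨x, h⟩) else none
  | none => none

end ProjLine

/-- A pair of polynomials `(p, q)` over a field is the (dehomogenized) description of a
morphism `P¹ → P¹` of degree `d`:  `p` and `q` are coprime, have degree at most `d`,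
and at least one of them has degree exactly `d`. -/
def IsRatMapOfDeg {F : Type*} [Field F] (d : ℕ) (p q : F[X]) : Prop :=
  IsCoprime p q ∧ p.natDegree ≤ d ∧ q.natDegree ≤ d ∧ (p.natDegree = d ∨ q.natDegree = d)

open IsDedekindDomain NumberField

/-- The finite places of a number field `K`, i.e. the nonzero primes of its ring of
integers.  (Archimedean places impose no good-reduction conditions, so a finite set `S`
of places containing all archimedean ones is modelled by its finite set of
nonarchimedean members.) -/
abbrev NFPlace (K : Type*) [Field K] [NumberField K] := HeightOneSpectrum (𝓞 K)

variable {K : Type*} [Field K] [NumberField K]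

/-- `x ∈ R_S`: `x` is integral at every place outside `S`. -/
def SInteger (S : Set (NFPlace K)) (x : K) : Prop :=
  ∀ v : NFPlace K, v ∉ S → v.valuation K x ≤ 1

/-- `x ∈ R_S^×`: `x` is a unit at every place outside `S`. -/
def SUnit (S : Set (NFPlace K)) (x : K) : Prop :=
  x ≠ 0 ∧ ∀ v : NFPlace K, v ∉ S → v.valuation K x = 1

section Ext

variable {Kb : Type*} [Field Kb] [Algebra K Kb]

/-- A valuation subring `O` of an extension `Kb` of `K` lies over the place `v` of `K`
if its restriction to `K` is exactly the valuation ring of `v`. -/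
def LiesOver (O : ValuationSubring Kb) (v : NFPlace K) : Prop :=
  ∀ x : K, algebraMap K Kb x ∈ O ↔ v.valuation K x ≤ 1

/-- A set `X` of points of the projective line over an extension of `K` has good
reduction outside `S` if for every place `v ∉ S` and every extension of `v`
(i.e. every valuation subring lying over `v`), reduction is injective on `X`. -/
def GoodRedPoints (S : Set (NFPlace K)) (X : Set (ProjLine Kb)) : Prop :=
  ∀ v : NFPlace K, v ∉ S → ∀ O : ValuationSubring Kb, LiesOver O v →
    Set.InjOn (ProjLine.red O) X

/-- `X` is stable under the action of `Gal(Kb/K)`. -/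
def GalInvariant (X : Set (ProjLine Kb)) : Prop :=
  ∀ σ : Kb ≃ₐ[K] Kb, ∀ P ∈ X, Option.map (⇑σ) P ∈ X

end Ext

variable (K) in
/-- A triple `(f, Y, X)` consisting of (the dehomogenized description of) a rational
map and two sets of points of `P¹(K̄)`. -/
structure DynTriple where
  p : K[X]
  q : K[X]
  Y : Set (ProjLine (AlgebraicClosure K))
  X : Set (ProjLine (AlgebraicClosure K))

/-- Base change of a polynomial over `K` to the algebraic closure. -/
def polyBar (p : K[X]) : (AlgebraicClosure K)[X] := p.map (algebraMap K (AlgebraicClosure K))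

/-- Base change of a matrix over `K` to the algebraic closure. -/
def matBar (M : Matrix (Fin 2) (Fin 2) K) : Matrix (Fin 2) (Fin 2) (AlgebraicClosure K) :=
  M.map (algebraMap K (AlgebraicClosure K))

/-- `f` (given by the pair `(p,q)` of degree `d`) has simple good reduction outside `S`:
some `PGL₂(K)`-conjugate of `f` is given by a pair of `S`-integral polynomials whose
resultant is an `S`-unit. -/
def SimpleGoodRed (S : Set (NFPlace K)) (d : ℕ) (p q : K[X]) : Prop :=
  ∃ (M : Matrix (Fin 2) (Fin 2) K) (p' q' : K[X]),
    M.det ≠ 0 ∧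
    IsRatMapOfDeg d p' q' ∧
    (∀ n, SInteger S (p'.coeff n)) ∧ (∀ n, SInteger S (q'.coeff n)) ∧
    SUnit S (ProjLine.resultant d d p' q') ∧
    ∀ P : ProjLine K,
      ProjLine.mobius M (ProjLine.eval d p' q' P)
        = ProjLine.eval d p q (ProjLine.mobius M P)

/-- Membership in `𝐺𝑅̃¹_d[n](K,S)`:  `(f, Y, X)` with `f` of degree `d`, `X = Y ∪ f(Y)`
finite and Galois invariant, total ramification weight `n` on `Y`, and `X` of good
reduction outside `S`.  (No good-reduction requirement on `f` itself.) -/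
def MemGRtilde (S : Set (NFPlace K)) (d n : ℕ) (t : DynTriple K) : Prop :=
  IsRatMapOfDeg d t.p t.q ∧
  t.Y.Finite ∧
  t.X = t.Y ∪ (ProjLine.eval d (polyBar t.p) (polyBar t.q) '' t.Y) ∧
  GalInvariant (K := K) t.X ∧
  (∑ᶠ P ∈ t.Y, ProjLine.ram d (polyBar t.p) (polyBar t.q) P) = n ∧
  GoodRedPoints S t.X

/-- Membership in `𝐺𝑅¹_d[n](K,S)`: as in `MemGRtilde`, and in addition `f` has simple
good reduction outside `S`. -/
def MemGR (S : Set (NFPlace K)) (d n : ℕ) (t : DynTriple K) : Prop :=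
  MemGRtilde S d n t ∧ SimpleGoodRed S d t.p t.q

/-- Two triples are `PGL₂(R_S)`-equivalent:  `t' = φ⁻¹ ∘ t ∘ φ` for some `φ = M` with
`S`-integral entries and `S`-unit determinant. -/
def TripleEquiv (S : Set (NFPlace K)) (d : ℕ) (t t' : DynTriple K) : Prop :=
  ∃ M : Matrix (Fin 2) (Fin 2) K,
    (∀ i j, SInteger S (M i j)) ∧ SUnit S M.det ∧
    (∀ P, ProjLine.mobius (matBar M) (ProjLine.eval d (polyBar t'.p) (polyBar t'.q) P)
        = ProjLine.eval d (polyBar t.p) (polyBar t.q) (ProjLine.mobius (matBar M) P)) ∧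
    ProjLine.mobius (matBar M) '' t'.Y = t.Y ∧
    ProjLine.mobius (matBar M) '' t'.X = t.X

end

/-!
For a prime `ℓ`, let `f_ℓ(x) = ℓ^(d+1) / x^d` and `X = Y = {0, ∞}`. Conjugation by `x ↦ ℓx` turns
`f_ℓ` into `1 / x^d`, whose Sylvester matrix is a permutation matrix, so `f_ℓ` has simple good
reduction everywhere; it swaps `0` and `∞`, each of ramification index `d`, so the triple has
weight `2d`. A conjugacy in `PGL₂(ℤ_S)` between `f_ℓ` and `f_m` preserves `{0, ∞}`, hence is
diagonal or antidiagonal with entries that are units at every place `v ∉ S`; evaluating it at `1`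
gives `v(ℓ) = v(m)` or `v(ℓ) v(m) = 1`. Both fail at `v = ℓ` when `ℓ ≠ m` and `ℓ ∉ S`, and
infinitely many primes lie outside `S`.
-/

noncomputable section

open Polynomial IsDedekindDomain NumberField
open scoped Matrix

namespace ProjLine

variable {L : Type*} [Field L] {d : ℕ}

def ofCoords (v : Fin 2 → L) : ProjLine L :=
  if v 1 = 0 then none else some (v 0 / v 1)

def coords : ProjLine L → Fin 2 → L
  | some x => ![x, 1]
  | none => ![1, 0]

lemma coords_ne_zero (P : ProjLine L) : coords P ≠ 0 := by
  cases P <;> simp [coords, funext_iff, Fin.forall_fin_two]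

lemma ofCoords_coords (P : ProjLine L) : ofCoords (coords P) = P := by
  cases P <;> simp [ofCoords, coords]

lemma ofCoords_smul {c : L} (hc : c ≠ 0) (v : Fin 2 → L) : ofCoords (c • v) = ofCoords v := by
  simp [ofCoords, hc, mul_div_mul_left]

lemma exists_coords_ofCoords_eq_smul {v : Fin 2 → L} (hv : v ≠ 0) :
    ∃ c ≠ (0 : L), coords (ofCoords v) = c • v := by
  by_cases h1 : v 1 = 0
  · have h0 : v 0 ≠ 0 := fun h0 => hv (funext (Fin.forall_fin_two.2 ⟨h0, h1⟩))
    refine ⟨(v 0)⁻¹, inv_ne_zero h0, funext (Fin.forall_fin_two.2 ?_)⟩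
    simp [ofCoords, coords, h0, h1]
  · refine ⟨(v 1)⁻¹, inv_ne_zero h1, funext (Fin.forall_fin_two.2 ?_)⟩
    simp [ofCoords, coords, h1, div_eq_inv_mul]

lemma mobius_eq_ofCoords (M : Matrix (Fin 2) (Fin 2) L) (P : ProjLine L) :
    mobius M P = ofCoords (M *ᵥ coords P) := by
  cases P <;> simp [mobius, ofCoords, coords, Matrix.mulVec, dotProduct, Fin.sum_univ_two]

lemma mobius_mul (A : Matrix (Fin 2) (Fin 2) L) {B : Matrix (Fin 2) (Fin 2) L}
    (hB : B.det ≠ 0) (P : ProjLine L) :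
    mobius (A * B) P = mobius A (mobius B P) := by
  have hBP : B *ᵥ coords P ≠ 0 := fun h =>
    coords_ne_zero P (Matrix.eq_zero_of_mulVec_eq_zero hB h)
  obtain ⟨c, hc, hcoords⟩ := exists_coords_ofCoords_eq_smul hBP
  rw [mobius_eq_ofCoords, mobius_eq_ofCoords, mobius_eq_ofCoords, hcoords,
    Matrix.mulVec_smul, ← Matrix.mulVec_mulVec, ofCoords_smul hc]

lemma mobius_smul_one {c : L} (hc : c ≠ 0) (P : ProjLine L) :
    mobius (c • (1 : Matrix (Fin 2) (Fin 2) L)) P = P := by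
  rw [mobius_eq_ofCoords, Matrix.smul_mulVec, Matrix.one_mulVec, ofCoords_smul hc,
    ofCoords_coords]

lemma mobius_adjugate_mobius {M : Matrix (Fin 2) (Fin 2) L} (hM : M.det ≠ 0) (P : ProjLine L) :
    mobius M.adjugate (mobius M P) = P := by
  rw [← mobius_mul _ hM, Matrix.adjugate_mul, mobius_smul_one hM]

lemma mobius_mobius_adjugate {M : Matrix (Fin 2) (Fin 2) L} (hM : M.det ≠ 0) (P : ProjLine L) :
    mobius M (mobius M.adjugate P) = P := by
  have hadj : M.adjugate.det ≠ 0 := by simpa [Matrix.det_adjugate] using hM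
  rw [← mobius_mul _ hadj, Matrix.mul_adjugate, mobius_smul_one hM]

section Map

variable {L' : Type*} [Field L'] (f : L →+* L')

lemma mobius_map (M : Matrix (Fin 2) (Fin 2) L) (P : ProjLine L) :
    mobius (M.map f) (P.map f) = (mobius M P).map f := by
  cases P <;> simp only [mobius, Matrix.map_apply, ← map_mul, ← map_add, map_eq_zero,
    apply_ite (Option.map f), Option.map_some, Option.map_none, map_div₀]

lemma evalAt_map (p q : L[X]) (x : L) :
    evalAt (p.map f) (q.map f) (f x) = (evalAt p q x).map f := by
  simp [evalAt, eval_map_apply, apply_ite (Option.map f)]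

lemma eval_map (p q : L[X]) (P : ProjLine L) :
    eval d (p.map f) (q.map f) (P.map f) = (eval d p q P).map f := by
  cases P with
  | some x => exact evalAt_map f p q x
  | none => simpa [eval, reflect_map] using evalAt_map f (p.reflect d) (q.reflect d) 0

lemma mobius_eval_comm_of_map {M : Matrix (Fin 2) (Fin 2) L} {p q p' q' : L[X]}
    (h : ∀ P, mobius (M.map f) (eval d (p.map f) (q.map f) P)
      = eval d (p'.map f) (q'.map f) (mobius (M.map f) P))
    (P : ProjLine L) :
    mobius M (eval d p q P) = eval d p' q' (mobius M P) :=
  Option.map_injective f.injective <| by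
    rw [← mobius_map, ← eval_map, h, mobius_map, eval_map]

end Map

lemma reflect_X_pow_self : (X ^ d : L[X]).reflect d = 1 := by
  rw [reflect_monomial, revAt_le le_rfl, Nat.sub_self, pow_zero]

lemma eval_C_X_pow_some (hd : d ≠ 0) (c x : L) :
    eval d (C c) (X ^ d) (some x) = if x = 0 then none else some (c / x ^ d) := by
  by_cases hx : x = 0 <;> simp [eval, evalAt, hx, hd]

lemma eval_C_X_pow_none (hd : d ≠ 0) (c : L) : eval d (C c) (X ^ d) none = some 0 := by
  simp [eval, evalAt, reflect_C, hd]

lemma ram_C_X_pow_zero (hd : d ≠ 0) (c : L) : ram d (C c) (X ^ d) (some 0) = d := by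
  simpa [ram, ramAt, hd] using rootMultiplicity_X_sub_C_pow (0 : L) d

lemma ram_C_X_pow_none (hd : d ≠ 0) {c : L} (hc : c ≠ 0) : ram d (C c) (X ^ d) none = d := by
  simpa [ram, ramAt, reflect_C, reflect_X_pow_self, hd, rootMultiplicity_mul, hc] using
    rootMultiplicity_X_sub_C_pow (0 : L) d

lemma eval_C_X_pow_image_zero_none (hd : d ≠ 0) (c : L) :
    eval d (C c) (X ^ d) '' {some 0, none} = {some 0, none} := by
  rw [Set.image_pair, eval_C_X_pow_some hd, if_pos rfl, eval_C_X_pow_none hd, Set.pair_comm]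

lemma mobius_diagonal_some {a e : L} (he : e ≠ 0) (x : L) :
    mobius !![a, 0; 0, e] (some x) = some (a * x / e) := by
  simp [mobius, he]

lemma mobius_diagonal_none (a e : L) : mobius !![a, 0; 0, e] none = none := by
  simp [mobius]

lemma mobius_antidiagonal_some {b k x : L} (hk : k ≠ 0) (hx : x ≠ 0) :
    mobius !![0, b; k, 0] (some x) = some (b / (k * x)) := by
  simp [mobius, hk, hx]

lemma mobius_image_zero_none {M : Matrix (Fin 2) (Fin 2) L}
    (h : mobius M '' {some 0, none} = {some 0, none}) :
    (M 0 1 = 0 ∧ M 1 0 = 0) ∨ (M 0 0 = 0 ∧ M 1 1 = 0) := by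
  have hmaps : mobius M (some 0) ∈ ({some 0, none} : Set (ProjLine L)) :=
    h ▸ Set.mem_image_of_mem _ (Or.inl rfl)
  have hcover : ∀ P ∈ ({some 0, none} : Set (ProjLine L)),
      P = mobius M (some 0) ∨ P = mobius M none := fun P hP => by
    rw [← h, Set.image_pair] at hP
    exact hP
  by_cases h11 : M 1 1 = 0
  · right
    obtain h0 | h0 := hcover (some 0) (Or.inl rfl)
    · simp [mobius, h11] at h0
    · by_cases h10 : M 1 0 = 0
      · simp [mobius, h10] at h0
      · simp_all [mobius, eq_comm (a := (0 : L))]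
  · left
    have h01 : M 0 1 = 0 := by simpa [mobius, h11] using hmaps
    obtain hinf | hinf := hcover none (Or.inr rfl)
    · simp [mobius, h11] at hinf
    · exact ⟨h01, by simpa [mobius] using hinf⟩

lemma mobius_diagonal_conj_C_X_pow (hd : d ≠ 0) {u : L} (hu : u ≠ 0) (P : ProjLine L) :
    mobius !![u, 0; 0, 1] (eval d (C 1) (X ^ d) P)
      = eval d (C (u ^ (d + 1))) (X ^ d) (mobius !![u, 0; 0, 1] P) := by
  have h1 : (1 : L) ≠ 0 := one_ne_zero
  rcases P with _ | x
  · rw [eval_C_X_pow_none hd, mobius_diagonal_some h1, mobius_diagonal_none,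
      eval_C_X_pow_none hd, mul_zero, zero_div]
  · by_cases hx : x = 0
    · rw [hx, eval_C_X_pow_some hd, if_pos rfl, mobius_diagonal_none, mobius_diagonal_some h1,
        mul_zero, zero_div, eval_C_X_pow_some hd, if_pos rfl]
    · rw [eval_C_X_pow_some hd, if_neg hx, mobius_diagonal_some h1, mobius_diagonal_some h1,
        eval_C_X_pow_some hd, if_neg (by simpa using ⟨hu, hx⟩)]
      congr 1
      field_simp
      ring

lemma eq_of_diagonal_conj_C_X_pow (hd : d ≠ 0) {a e c c' : L} (ha : a ≠ 0) (he : e ≠ 0)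
    (h : mobius !![a, 0; 0, e] (eval d (C c') (X ^ d) (some 1))
      = eval d (C c) (X ^ d) (mobius !![a, 0; 0, e] (some 1))) :
    a ^ (d + 1) * c' = c * e ^ (d + 1) := by
  rw [eval_C_X_pow_some hd, if_neg one_ne_zero, one_pow, div_one, mobius_diagonal_some he,
    mobius_diagonal_some he, mul_one, eval_C_X_pow_some hd, if_neg (div_ne_zero ha he),
    Option.some.injEq, div_pow, div_div_eq_mul_div, div_eq_div_iff he (pow_ne_zero d ha)] at h
  linear_combination h

lemma eq_of_antidiagonal_conj_C_X_pow (hd : d ≠ 0) {b k c c' : L} (hb : b ≠ 0) (hk : k ≠ 0)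
    (hc' : c' ≠ 0)
    (h : mobius !![0, b; k, 0] (eval d (C c') (X ^ d) (some 1))
      = eval d (C c) (X ^ d) (mobius !![0, b; k, 0] (some 1))) :
    b ^ (d + 1) = c * c' * k ^ (d + 1) := by
  rw [eval_C_X_pow_some hd, if_neg one_ne_zero, one_pow, div_one,
    mobius_antidiagonal_some hk hc', mobius_antidiagonal_some hk one_ne_zero, mul_one,
    eval_C_X_pow_some hd, if_neg (div_ne_zero hb hk), Option.some.injEq, div_pow,
    div_div_eq_mul_div, div_eq_div_iff (mul_ne_zero hk hc') (pow_ne_zero d hb)] at h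
  linear_combination h

lemma sylvester_C_one_X_pow :
    sylvester d d (C (1 : L)) (X ^ d)
      = Equiv.Perm.permMatrix L (finAddFlip : Equiv.Perm (Fin (d + d))) := by
  ext ⟨i, hi⟩ ⟨j, hj⟩
  simp only [sylvester, Matrix.of_apply, Equiv.Perm.permMatrix, PEquiv.toMatrix_apply,
    Equiv.toPEquiv_apply, Option.mem_def, Option.some.injEq, coeff_C, coeff_X_pow, Fin.ext_iff]
  by_cases h : i < d
  · rw [finAddFlip_apply_mk_left h]
    simp only [h, if_true]
    split_ifs <;> first | rfl | (exfalso; omega)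
  · rw [finAddFlip_apply_mk_right (not_lt.1 h)]
    simp only [h, if_false]
    split_ifs <;> first | rfl | (exfalso; omega)

lemma resultant_C_one_X_pow :
    resultant d d (C (1 : L)) (X ^ d)
      = ((Equiv.Perm.sign (finAddFlip : Equiv.Perm (Fin (d + d))) : ℤ) : L) := by
  rw [resultant, sylvester_C_one_X_pow, Matrix.det_permutation]

end ProjLine

lemma isRatMapOfDeg_C_X_pow {L : Type*} [Field L] {d : ℕ} {c : L} (hc : c ≠ 0) :
    IsRatMapOfDeg d (C c) (X ^ d) :=
  ⟨⟨C c⁻¹, 0, by rw [zero_mul, add_zero, ← C_mul, inv_mul_cancel₀ hc, C_1]⟩,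
    by simp, by simp, Or.inr (natDegree_X_pow d)⟩

section BaseChange

variable {K : Type*} [Field K]

lemma matBar_adjugate (M : Matrix (Fin 2) (Fin 2) K) : matBar M.adjugate = (matBar M).adjugate :=
  (algebraMap K (AlgebraicClosure K)).map_adjugate M

lemma matBar_mul (M N : Matrix (Fin 2) (Fin 2) K) : matBar (M * N) = matBar M * matBar N :=
  Matrix.map_mul

lemma det_matBar_ne_zero {M : Matrix (Fin 2) (Fin 2) K} (hM : M.det ≠ 0) : (matBar M).det ≠ 0 := by
  rwa [matBar, ← RingHom.mapMatrix_apply, ← RingHom.map_det, _root_.map_ne_zero]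

end BaseChange

section NumberField

variable {K : Type*} [Field K] [NumberField K] {S : Set (NFPlace K)}

lemma sInteger_iff_mem_integer {x : K} : SInteger S x ↔ x ∈ S.integer K := Iff.rfl

lemma SUnit.mul {x y : K} (hx : SUnit S x) (hy : SUnit S y) : SUnit S (x * y) :=
  ⟨mul_ne_zero hx.1 hy.1, fun v hv => by rw [map_mul, hx.2 v hv, hy.2 v hv, mul_one]⟩

lemma sUnit_intCast_unit (ε : ℤˣ) : SUnit S ((ε : ℤ) : K) := by
  rcases Int.units_eq_one_or ε with rfl | rfl <;>
    exact ⟨by norm_num, fun v _ => by simp⟩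

lemma SUnit.left_of_mul {x y : K} (hx : SInteger S x) (hy : SInteger S y) (h : SUnit S (x * y)) :
    SUnit S x := by
  refine ⟨left_ne_zero_of_mul h.1, fun v hv => le_antisymm (hx v hv) ?_⟩
  calc 1 = v.valuation K x * v.valuation K y := by rw [← map_mul, h.2 v hv]
    _ ≤ v.valuation K x := mul_le_of_le_one_right' (hy v hv)

lemma sInteger_mul_apply {M N : Matrix (Fin 2) (Fin 2) K} (hM : ∀ i j, SInteger S (M i j))
    (hN : ∀ i j, SInteger S (N i j)) (i j : Fin 2) : SInteger S ((M * N) i j) := by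
  rw [sInteger_iff_mem_integer, Matrix.mul_apply]
  exact sum_mem fun k _ => mul_mem (hM i k) (hN k j)

lemma sInteger_adjugate_apply {M : Matrix (Fin 2) (Fin 2) K} (hM : ∀ i j, SInteger S (M i j))
    (i j : Fin 2) : SInteger S (M.adjugate i j) := by
  simp only [sInteger_iff_mem_integer] at hM ⊢
  fin_cases i <;> fin_cases j <;> simp [Matrix.adjugate_fin_two, hM]

variable {d : ℕ}

lemma TripleEquiv.symm {t t' : DynTriple K} (h : TripleEquiv S d t t') : TripleEquiv S d t' t := by
  obtain ⟨M, hint, hdet, hconj, hY, hX⟩ := h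
  have hM := det_matBar_ne_zero hdet.1
  have hleft : Function.LeftInverse (ProjLine.mobius (matBar M).adjugate)
      (ProjLine.mobius (matBar M)) := ProjLine.mobius_adjugate_mobius hM
  refine ⟨M.adjugate, sInteger_adjugate_apply hint, ?_, fun P => ?_, ?_, ?_⟩
  · simpa [Matrix.det_adjugate] using hdet
  · rw [matBar_adjugate, ← ProjLine.mobius_mobius_adjugate hM P, ← hconj, hleft,
      ProjLine.mobius_mobius_adjugate hM]
  · rw [matBar_adjugate, ← hY, hleft.image_image]
  · rw [matBar_adjugate, ← hX, hleft.image_image]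

lemma TripleEquiv.trans {t₁ t₂ t₃ : DynTriple K} (h₁ : TripleEquiv S d t₁ t₂)
    (h₂ : TripleEquiv S d t₂ t₃) : TripleEquiv S d t₁ t₃ := by
  obtain ⟨M, hintM, hdetM, hconjM, hYM, hXM⟩ := h₁
  obtain ⟨N, hintN, hdetN, hconjN, hYN, hXN⟩ := h₂
  have hmul : ProjLine.mobius (matBar (M * N))
      = ProjLine.mobius (matBar M) ∘ ProjLine.mobius (matBar N) :=
    funext fun P => by rw [matBar_mul, ProjLine.mobius_mul _ (det_matBar_ne_zero hdetN.1)]; rfl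
  refine ⟨M * N, sInteger_mul_apply hintM hintN, ?_, fun P => ?_, ?_, ?_⟩
  · rw [Matrix.det_mul]
    exact hdetM.mul hdetN
  · simp only [hmul, Function.comp_apply, hconjN, hconjM]
  · rw [hmul, Set.image_comp, hYN, hYM]
  · rw [hmul, Set.image_comp, hXN, hXM]

end NumberField

lemma galInvariant_zero_none {K : Type*} [Field K] :
    GalInvariant (K := K) {some 0, (none : ProjLine (AlgebraicClosure K))} := by
  rintro σ P (rfl | rfl) <;> simp

section PowerMap

variable {K : Type*} [Field K] [NumberField K] {S : Set (NFPlace K)} {d : ℕ}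

lemma goodRedPoints_zero_none :
    GoodRedPoints S {some 0, (none : ProjLine (AlgebraicClosure K))} := by
  intro v _ O _
  simp [Set.injOn_pair, ProjLine.red]

variable (d) in
def powerMapTriple (u : K) : DynTriple K :=
  ⟨C (u ^ (d + 1)), X ^ d, {some 0, none}, {some 0, none}⟩

lemma simpleGoodRed_powerMap (hd : d ≠ 0) {u : K} (hu : u ≠ 0) :
    SimpleGoodRed S d (C (u ^ (d + 1))) (X ^ d) := by
  refine ⟨!![u, 0; 0, 1], C 1, X ^ d, by simpa using hu, isRatMapOfDeg_C_X_pow one_ne_zero,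
    fun n => ?_, fun n => ?_, ?_, ProjLine.mobius_diagonal_conj_C_X_pow hd hu⟩
  · rw [coeff_C, sInteger_iff_mem_integer]
    split_ifs <;> simp [one_mem, zero_mem]
  · rw [coeff_X_pow, sInteger_iff_mem_integer]
    split_ifs <;> simp [one_mem, zero_mem]
  · rw [ProjLine.resultant_C_one_X_pow]
    exact sUnit_intCast_unit _

lemma memGR_powerMapTriple (hd : d ≠ 0) {u : K} (hu : u ≠ 0) :
    MemGR S d (2 * d) (powerMapTriple d u) := by
  have hc : algebraMap K (AlgebraicClosure K) (u ^ (d + 1)) ≠ 0 := by simpa using hu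
  have hp : polyBar (C (u ^ (d + 1))) = C (algebraMap K _ (u ^ (d + 1))) := map_C _
  have hq : polyBar (X ^ d : K[X]) = X ^ d := by simp [polyBar]
  refine ⟨⟨isRatMapOfDeg_C_X_pow (pow_ne_zero _ hu), (Set.finite_singleton _).insert _, ?_,
    galInvariant_zero_none, ?_, goodRedPoints_zero_none⟩, simpleGoodRed_powerMap hd hu⟩
  · rw [powerMapTriple, hp, hq, ProjLine.eval_C_X_pow_image_zero_none hd, Set.union_self]
  · rw [powerMapTriple, hp, hq, finsum_mem_pair (by simp), ProjLine.ram_C_X_pow_zero hd,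
      ProjLine.ram_C_X_pow_none hd hc, two_mul]

theorem TripleEquiv.valuation_powerMap (hd : d ≠ 0) {u w : K} (hw : w ≠ 0)
    (h : TripleEquiv S d (powerMapTriple d u) (powerMapTriple d w)) {v : NFPlace K} (hv : v ∉ S) :
    v.valuation K u = v.valuation K w ∨ v.valuation K u * v.valuation K w = 1 := by
  obtain ⟨M, hint, hdet, hconj, -, hX⟩ := h
  have hconjK := ProjLine.mobius_eval_comm_of_map _ hconj (some 1)
  have hshape : (M 0 1 = 0 ∧ M 1 0 = 0) ∨ (M 0 0 = 0 ∧ M 1 1 = 0) := by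
    simpa [matBar] using ProjLine.mobius_image_zero_none hX
  rcases hshape with ⟨h01, h10⟩ | ⟨h00, h11⟩
  · have hdet' : SUnit S (M 0 0 * M 1 1) := by simpa [Matrix.det_fin_two, h01, h10] using hdet
    have ha := hdet'.left_of_mul (hint 0 0) (hint 1 1)
    have he := (mul_comm (M 0 0) _ ▸ hdet').left_of_mul (hint 1 1) (hint 0 0)
    rw [Matrix.eta_fin_two M, h01, h10] at hconjK
    have key := congrArg (v.valuation K)
      (ProjLine.eq_of_diagonal_conj_C_X_pow hd ha.1 he.1 hconjK)
    simp only [map_mul, map_pow, ha.2 v hv, he.2 v hv, one_pow, one_mul, mul_one] at key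
    exact Or.inl (pow_left_injective d.succ_ne_zero key.symm)
  · have hdet' : SUnit S (M 0 1 * M 1 0) := by
      simpa [Matrix.det_fin_two, h00, h11, SUnit] using hdet
    have hb := hdet'.left_of_mul (hint 0 1) (hint 1 0)
    have hk := (mul_comm (M 0 1) _ ▸ hdet').left_of_mul (hint 1 0) (hint 0 1)
    rw [Matrix.eta_fin_two M, h00, h11] at hconjK
    have key := congrArg (v.valuation K)
      (ProjLine.eq_of_antidiagonal_conj_C_X_pow hd hb.1 hk.1 (pow_ne_zero _ hw) hconjK)
    simp only [map_mul, map_pow, hb.2 v hv, hk.2 v hv, one_pow, mul_one, ← mul_pow] at key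
    exact Or.inr (pow_left_injective d.succ_ne_zero (key.symm.trans (one_pow _).symm))

end PowerMap

theorem Set.Infinite.exists_forall_not_rel_of_finite {α β : Type*} {r : β → β → Prop}
    (hr : ∀ a b c, r a c → r b c → r a b) {s : Set α} (hs : s.Infinite) {f : α → β}
    (hf : ∀ x ∈ s, ∀ y ∈ s, r (f x) (f y) → x = y) {T : Set β} (hT : T.Finite) :
    ∃ x ∈ s, ∀ t ∈ T, ¬ r (f x) t := by
  by_contra! hcover
  refine hs ((hT.biUnion fun t _ => Set.Subsingleton.finite (s := {x | x ∈ s ∧ r (f x) t})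
    fun x hx y hy => hf x hx.1 y hy.1 (hr _ _ _ hx.2 hy.2)).subset fun x hx => ?_)
  obtain ⟨t, ht, hxt⟩ := hcover x hx
  exact Set.mem_biUnion ht ⟨hx, hxt⟩

lemma Nat.Primes.infinite_setOf_not_dvd {n : ℕ} (hn : n ≠ 0) :
    {p : Nat.Primes | ¬ (p : ℕ) ∣ n}.Infinite := by
  have hfin : {p : Nat.Primes | (p : ℕ) ∣ n}.Finite :=
    (n.divisors.finite_toSet.preimage Nat.Primes.coe_nat_injective.injOn).subset
      fun p hp => Nat.mem_divisors.2 ⟨hp, hn⟩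
  exact hfin.infinite_compl

def ratPlace (p : Nat.Primes) : NFPlace ℚ :=
  (Rat.HeightOneSpectrum.primesEquiv (R := 𝓞 ℚ)).symm p

open Rat.HeightOneSpectrum in
lemma ratPlace_valuation_natCast_lt_one_iff (p : Nat.Primes) (n : ℕ) :
    (ratPlace p).valuation ℚ n < 1 ↔ (p : ℕ) ∣ n := by
  have hn : (n : ℚ) = algebraMap (𝓞 ℚ) ℚ (n : 𝓞 ℚ) := by simp
  conv_rhs => rw [← (primesEquiv (R := 𝓞 ℚ)).apply_symm_apply p]
  rw [hn, HeightOneSpectrum.valuation_lt_one_iff_mem]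
  change _ ↔ natGenerator _ ∣ n
  rw [natGenerator_dvd_iff, ← map_natCast (Rat.IsIntegralClosure.intEquiv (𝓞 ℚ)),
    Ideal.apply_mem_of_equiv_iff]
  rfl

lemma ratPlace_valuation_natCast_eq_one_iff (p : Nat.Primes) (n : ℕ) :
    (ratPlace p).valuation ℚ n = 1 ↔ ¬ (p : ℕ) ∣ n := by
  have hle : (ratPlace p).valuation ℚ n ≤ 1 := by
    simpa using (ratPlace p).valuation_le_one (K := ℚ) (n : 𝓞 ℚ)
  rw [← ratPlace_valuation_natCast_lt_one_iff, hle.lt_iff_ne, not_not]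

lemma not_tripleEquiv_powerMapTriple_prime {S : Set (NFPlace ℚ)} {d : ℕ} (hd : d ≠ 0)
    {p q : Nat.Primes} (hpq : p ≠ q) (hp : ratPlace p ∉ S) :
    ¬ TripleEquiv S d (powerMapTriple d ((p : ℕ) : ℚ)) (powerMapTriple d ((q : ℕ) : ℚ)) := by
  intro h
  have hlt : (ratPlace p).valuation ℚ (p : ℕ) < 1 :=
    (ratPlace_valuation_natCast_lt_one_iff p p).2 dvd_rfl
  have hone : (ratPlace p).valuation ℚ (q : ℕ) = 1 :=
    (ratPlace_valuation_natCast_eq_one_iff p q).2 fun hdvd =>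
      hpq (Nat.Primes.coe_nat_injective ((Nat.prime_dvd_prime_iff_eq p.2 q.2).1 hdvd))
  rcases h.valuation_powerMap hd (by exact_mod_cast q.2.ne_zero) hp with h' | h' <;>
    rw [hone] at h'
  · exact hlt.ne h'
  · exact hlt.ne ((mul_one _).symm.trans h')

/-- **Dynamical Shafarevich finiteness fails for weight 2d** (Theorem 1.3(b)).
Let `S` be the set of rational primes dividing `(2d-2)!`.  Then
`GR¹_d[2d](ℚ,S)/PGL₂(ℤ_S)` is infinite; indeed there are infinitely many
`PGL₂(ℤ_S)`-equivalence classes of preperiodic triples `(f, X, X)` in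
`GR¹_d[2d](ℚ,S)`. -/
theorem dynamical_shafarevich_fails_weight_two_d
    (d : ℕ) (hd : 2 ≤ d)
    (S : Set (NFPlace ℚ))
    (hS : S = {v : NFPlace ℚ | v.valuation ℚ ((Nat.factorial (2 * d - 2) : ℚ)) ≠ 1}) :
    (¬ ∃ T : Set (DynTriple ℚ), T.Finite ∧
        ∀ t : DynTriple ℚ, MemGR S d (2 * d) t → ∃ t' ∈ T, TripleEquiv S d t t') ∧
    (¬ ∃ T : Set (DynTriple ℚ), T.Finite ∧
        ∀ t : DynTriple ℚ, MemGR S d (2 * d) t ∧ t.Y = t.X →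
          ∃ t' ∈ T, TripleEquiv S d t t') := by
  have hd0 : d ≠ 0 := by omega
  set s := {p : Nat.Primes | ¬ (p : ℕ) ∣ (2 * d - 2).factorial}
  have hs : s.Infinite := Nat.Primes.infinite_setOf_not_dvd (Nat.factorial_ne_zero _)
  have hsep : ∀ p ∈ s, ∀ q ∈ s,
      TripleEquiv S d (powerMapTriple d ((p : ℕ) : ℚ)) (powerMapTriple d ((q : ℕ) : ℚ)) → p = q :=
    fun p hp q _ h => by_contra fun hpq => not_tripleEquiv_powerMapTriple_prime hd0 hpq
      (by rwa [hS, Set.mem_ofPred_eq, not_not, ratPlace_valuation_natCast_eq_one_iff]) h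
  have hpreperiodic : ¬ ∃ T : Set (DynTriple ℚ), T.Finite ∧
      ∀ t : DynTriple ℚ, MemGR S d (2 * d) t ∧ t.Y = t.X → ∃ t' ∈ T, TripleEquiv S d t t' := by
    rintro ⟨T, hT, hcover⟩
    obtain ⟨p, -, hpT⟩ := hs.exists_forall_not_rel_of_finite
      (fun _ _ _ h₁ h₂ => h₁.trans h₂.symm) hsep hT
    obtain ⟨t, ht, hpt⟩ := hcover _
      ⟨memGR_powerMapTriple (u := ((p : ℕ) : ℚ)) hd0 (by exact_mod_cast p.2.ne_zero), rfl⟩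
    exact hpT t ht hpt
  exact ⟨fun ⟨T, hT, hcover⟩ => hpreperiodic ⟨T, hT, fun t ht => hcover t ht.1⟩, hpreperiodic⟩

end
end

section
/- Let R be a discrete valuation ring with maximal ideal 𝔓 and fraction field K. Let P_1, P_2, P_3 ∈ P^1(K) be points whose reductions modulo 𝔓 are pairwise distinct, and let Q_1, Q_2, Q_3 ∈ P^1(K) also be points with pairwise distinct reductions modulo 𝔓. Let φ ∈ PGL_2(K) be the unique linear fractional transformation satisfying φ(P_i) = Q_i for 1 ≤ i ≤ 3. Then φ ∈ PGL_2(R), i.e., φ has good reduction modulo 𝔓. -/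
open Polynomial
open scoped Classical

/-! Rescale `M` so that its entries lie in `O` and one of them is `1`. If the determinant were
not a unit, the reduction of `M` would be a nonzero singular matrix over the residue field `k`.
Its kernel is a single point of `P¹(k)`, so at least two of the three distinct points `P̄ᵢ` lie
outside it, and these are all sent to the single point of `P¹(k)` spanned by the image of the
reduced matrix: two of the `Q̄ᵢ` would coincide. -/

noncomputable section

open Matrix IsLocalRing

theorem RingHom.comp_mulVec {R S m n : Type*} [NonAssocSemiring R] [NonAssocSemiring S]
    [Fintype n] (f : R →+* S) (M : Matrix m n R) (v : n → R) :
    f ∘ (M *ᵥ v) = M.map f *ᵥ (f ∘ v) :=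
  _root_.funext (f.map_mulVec M v)

namespace ValuationSubring

variable {L : Type*} [Field L] (O : ValuationSubring L)

theorem exists_primitive_rescaling {m n : Type*} [Finite m] [Finite n] {M : Matrix m n L}
    (hM : M ≠ 0) :
    ∃ s : L, s ≠ 0 ∧ ∃ N : Matrix m n O, N.map O.subtype = s • M ∧ N.map (residue O) ≠ 0 := by
  obtain ⟨i, j, hij⟩ : ∃ i j, M i j ≠ 0 := by simpa [← Matrix.ext_iff] using hM
  have : Nonempty (m × n) := ⟨(i, j)⟩
  obtain ⟨⟨i₀, j₀⟩, hmax⟩ := Finite.exists_max fun ij : m × n => O.valuation (M ij.1 ij.2)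
  have hpivot : M i₀ j₀ ≠ 0 := fun h =>
    hij (O.valuation.zero_iff.mp (le_zero_iff.mp (by simpa [h] using hmax (i, j))))
  have hmem (k l) : (M i₀ j₀)⁻¹ * M k l ∈ O := by
    rw [← valuation_le_one_iff, map_mul, map_inv₀, inv_mul_le_one₀
      (zero_lt_iff.mpr (O.valuation.ne_zero_iff.mpr hpivot))]
    exact hmax (k, l)
  refine ⟨(M i₀ j₀)⁻¹, inv_ne_zero hpivot, Matrix.of fun k l => ⟨_, hmem k l⟩, rfl, fun h => ?_⟩
  have h1 : (⟨_, hmem i₀ j₀⟩ : O) = 1 := Subtype.ext (inv_mul_cancel₀ hpivot)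
  simpa [h1] using congrFun (congrFun h i₀) j₀

end ValuationSubring

namespace ProjLine

section Field

variable {F : Type*} [Field F]

/-- The point `[x 0 : x 1]`; the junk value at `x = 0` is `none`. -/
def mk (x : Fin 2 → F) : ProjLine F := if x 1 = 0 then none else some (x 0 / x 1)

theorem mk_of_eq_zero {x : Fin 2 → F} (h : x 1 = 0) : mk x = none := if_pos h

theorem mk_of_ne_zero {x : Fin 2 → F} (h : x 1 ≠ 0) : mk x = some (x 0 / x 1) := if_neg h

theorem _root_.Ne.apply_zero_ne_zero {x : Fin 2 → F} (hx : x ≠ 0) (h1 : x 1 = 0) : x 0 ≠ 0 :=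
  fun h0 => hx (funext fun i => by fin_cases i <;> assumption)

theorem mk_eq_mk_iff {x y : Fin 2 → F} (hx : x ≠ 0) (hy : y ≠ 0) :
    mk x = mk y ↔ x 0 * y 1 = y 0 * x 1 := by
  by_cases hx1 : x 1 = 0 <;> by_cases hy1 : y 1 = 0
  · simp [mk_of_eq_zero, hx1, hy1]
  · simp [mk_of_eq_zero hx1, mk_of_ne_zero hy1, hx1, hx.apply_zero_ne_zero hx1, hy1]
  · simp [mk_of_eq_zero hy1, mk_of_ne_zero hx1, hx1, hy.apply_zero_ne_zero hy1, hy1]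
  · rw [mk_of_ne_zero hx1, mk_of_ne_zero hy1, Option.some_inj, div_eq_div_iff hx1 hy1]

theorem mobius_mk (M : Matrix (Fin 2) (Fin 2) F) {x : Fin 2 → F} (hx : x ≠ 0) :
    mobius M (mk x) = mk (M *ᵥ x) := by
  by_cases hx1 : x 1 = 0
  · simp [mk, mobius, mulVec, dotProduct, hx1, hx.apply_zero_ne_zero hx1, mul_div_mul_right]
  · simp only [mk, mobius, mulVec, dotProduct, Fin.sum_univ_two, hx1, if_false]
    have key : M 1 0 * (x 0 / x 1) + M 1 1 = (M 1 0 * x 0 + M 1 1 * x 1) / x 1 := by field_simp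
    have key2 : M 0 0 * (x 0 / x 1) + M 0 1 = (M 0 0 * x 0 + M 0 1 * x 1) / x 1 := by field_simp
    simp [key, key2, hx1, div_div_div_cancel_right₀]

theorem mobius_smul {s : F} (hs : s ≠ 0) (M : Matrix (Fin 2) (Fin 2) F) (P : ProjLine F) :
    mobius (s • M) P = mobius M P := by
  cases P <;> simp [mobius, mul_assoc, ← mul_add, hs, mul_div_mul_left]

theorem mk_mulVec_eq_mk_mulVec {A : Matrix (Fin 2) (Fin 2) F} (hA : A.det = 0)
    {x y : Fin 2 → F} (hx : A *ᵥ x ≠ 0) (hy : A *ᵥ y ≠ 0) : mk (A *ᵥ x) = mk (A *ᵥ y) := by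
  rw [mk_eq_mk_iff hx hy]
  simp only [mulVec, dotProduct, Fin.sum_univ_two]
  rw [det_fin_two] at hA
  linear_combination (x 0 * y 1 - x 1 * y 0) * hA

theorem eq_zero_of_mulVec_eq_zero {A : Matrix (Fin 2) (Fin 2) F} {x y : Fin 2 → F}
    (hx : x ≠ 0) (hy : y ≠ 0) (hxy : mk x ≠ mk y) (hAx : A *ᵥ x = 0) (hAy : A *ᵥ y = 0) :
    A = 0 := by
  rw [Ne, mk_eq_mk_iff hx hy, ← sub_eq_zero] at hxy
  have row (i : Fin 2) : A i 0 * x 0 + A i 1 * x 1 = 0 ∧ A i 0 * y 0 + A i 1 * y 1 = 0 := by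
    simpa [mulVec, dotProduct] using And.intro (congrFun hAx i) (congrFun hAy i)
  ext i j
  have h0 : A i 0 * (x 0 * y 1 - y 0 * x 1) = 0 := by
    linear_combination y 1 * (row i).1 - x 1 * (row i).2
  have h1 : A i 1 * (x 0 * y 1 - y 0 * x 1) = 0 := by
    linear_combination x 0 * (row i).2 - y 0 * (row i).1
  fin_cases j
  · exact (mul_eq_zero.mp h0).resolve_right hxy
  · exact (mul_eq_zero.mp h1).resolve_right hxy

theorem exists_pair_mulVec_ne_zero {A : Matrix (Fin 2) (Fin 2) F} (hA : A ≠ 0)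
    {x : Fin 3 → Fin 2 → F} (hx : ∀ i, x i ≠ 0) (hinj : ∀ i j, i ≠ j → mk (x i) ≠ mk (x j)) :
    ∃ i j, i ≠ j ∧ A *ᵥ x i ≠ 0 ∧ A *ᵥ x j ≠ 0 := by
  have kernel_unique {i j} (hij : i ≠ j) (hi : A *ᵥ x i = 0) (hj : A *ᵥ x j = 0) : False :=
    hA (eq_zero_of_mulVec_eq_zero (hx i) (hx j) (hinj i j hij) hi hj)
  by_cases h0 : A *ᵥ x 0 = 0
  · exact ⟨1, 2, by decide, fun h => kernel_unique (by decide) h0 h,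
      fun h => kernel_unique (by decide) h0 h⟩
  by_cases h1 : A *ᵥ x 1 = 0
  · exact ⟨0, 2, by decide, h0, fun h => kernel_unique (by decide) h1 h⟩
  · exact ⟨0, 1, by decide, h0, h1⟩

end Field

section Reduction

variable {L : Type*} [Field L] (O : ValuationSubring L)

theorem subtype_comp_ne_zero {p : Fin 2 → O} (hp : residue O ∘ p ≠ 0) : O.subtype ∘ p ≠ 0 :=
  fun h => hp (funext fun i => by simp [show p i = 0 from Subtype.ext (congrFun h i)])

theorem red_coe (x : O) : red O (some (x : L)) = some (residue O x) := dif_pos x.2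

theorem red_mk {p : Fin 2 → O} (hp : residue O ∘ p ≠ 0) :
    red O (mk (O.subtype ∘ p)) = mk (residue O ∘ p) := by
  by_cases hres1 : residue O (p 1) = 0
  · have hres0 : residue O (p 0) ≠ 0 := hp.apply_zero_ne_zero hres1
    rw [mk_of_eq_zero (x := residue O ∘ p) hres1]
    by_cases hp1 : (p 1 : L) = 0
    · rw [mk_of_eq_zero (x := O.subtype ∘ p) hp1]; rfl
    rw [mk_of_ne_zero (x := O.subtype ∘ p) hp1]
    refine dif_neg fun hmem => hres0 ?_
    have : p 0 = ⟨_, hmem⟩ * p 1 := Subtype.ext (div_mul_cancel₀ _ hp1).symm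
    rw [this, map_mul, hres1, mul_zero]
  · obtain ⟨u, hu⟩ := (residue_ne_zero_iff_isUnit _).mp hres1
    have hp1 : (p 1 : L) ≠ 0 := fun h => hres1 (by simp [show p 1 = 0 from Subtype.ext h])
    have hdiv : (p 0 : L) / p 1 = ((p 0 * ↑u⁻¹ : O) : L) := by
      rw [← hu, div_eq_iff (hu ▸ hp1)]
      push_cast
      rw [mul_assoc, ← Subring.coe_mul, Units.inv_mul, OneMemClass.coe_one, mul_one]
    have hres_div : residue O (p 0 * ↑u⁻¹) = residue O (p 0) / residue O (p 1) := by
      rw [eq_div_iff hres1, ← map_mul, mul_assoc, ← hu, Units.inv_mul, mul_one]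
    rw [mk_of_ne_zero (x := O.subtype ∘ p) hp1, mk_of_ne_zero (x := residue O ∘ p) hres1]
    simp only [Function.comp_apply, ValuationSubring.subtype_apply]
    rw [hdiv, red_coe, hres_div]

theorem exists_mk_eq (P : ProjLine L) :
    ∃ p : Fin 2 → O, residue O ∘ p ≠ 0 ∧ P = mk (O.subtype ∘ p) := by
  have primitive_of_eq_one (i : Fin 2) (p : Fin 2 → O) (h : p i = 1) : residue O ∘ p ≠ 0 :=
    fun h0 => by simpa [h] using congrFun h0 i
  rcases P with _ | t
  · exact ⟨![1, 0], primitive_of_eq_one 0 _ rfl, by simp [mk]⟩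
  by_cases ht : t ∈ O
  · exact ⟨![⟨t, ht⟩, 1], primitive_of_eq_one 1 _ rfl, by simp [mk]⟩
  · have ht0 : t ≠ 0 := fun h => ht (h ▸ O.zero_mem)
    refine ⟨![1, ⟨t⁻¹, (O.mem_or_inv_mem t).resolve_left ht⟩], primitive_of_eq_one 0 _ rfl, ?_⟩
    simp [mk, ht0]

end Reduction

end ProjLine

open ProjLine

theorem mobius_good_reduction_of_three_points_general
    (L : Type*) [Field L] (O : ValuationSubring L)
    (P Q : Fin 3 → ProjLine L)
    (hP : ∀ i j, i ≠ j → ProjLine.red O (P i) ≠ ProjLine.red O (P j))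
    (hQ : ∀ i j, i ≠ j → ProjLine.red O (Q i) ≠ ProjLine.red O (Q j))
    (M : Matrix (Fin 2) (Fin 2) L) (hM : M.det ≠ 0)
    (hmap : ∀ i, ProjLine.mobius M (P i) = Q i) :
    ∃ N : Matrix (Fin 2) (Fin 2) ↥O, IsUnit N.det ∧
      ∀ x : ProjLine L,
        ProjLine.mobius (N.map (fun r : ↥O => (r : L))) x = ProjLine.mobius M x := by
  obtain ⟨s, hs, N, hNM, hN⟩ := O.exists_primitive_rescaling (M := M) fun h => hM (by simp [h])
  have hmob (x : ProjLine L) : mobius (N.map O.subtype) x = mobius M x := by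
    rw [hNM, mobius_smul hs]
  refine ⟨N, (residue_ne_zero_iff_isUnit _).mp fun hdet => ?_, hmob⟩
  rw [RingHom.map_det] at hdet
  choose p hp hPp using fun i => exists_mk_eq O (P i)
  have hP_red (i j : Fin 3) (hij : i ≠ j) : mk (residue O ∘ p i) ≠ mk (residue O ∘ p j) := by
    rw [← red_mk O (hp i), ← red_mk O (hp j), ← hPp i, ← hPp j]
    exact hP i j hij
  obtain ⟨i, j, hij, hi, hj⟩ := exists_pair_mulVec_ne_zero hN hp hP_red
  have hQ_eq (i : Fin 3) : Q i = mk (O.subtype ∘ (N *ᵥ p i)) := by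
    rw [← hmap i, ← hmob, hPp i, mobius_mk _ (subtype_comp_ne_zero O (hp i)),
      O.subtype.comp_mulVec]
  have hres (i : Fin 3) : residue O ∘ (N *ᵥ p i) = N.map (residue O) *ᵥ (residue O ∘ p i) :=
    (residue O).comp_mulVec N (p i)
  apply hQ i j hij
  rw [hQ_eq i, hQ_eq j, red_mk O (hres i ▸ hi), red_mk O (hres j ▸ hj), hres i, hres j]
  exact mk_mulVec_eq_mk_mulVec hdet hi hj

/-- **Sublemma 3.4.** Let `O` be a discrete valuation ring, realized as a valuation
subring of its fraction field `L`.  If `P₁,P₂,P₃ ∈ P¹(L)` have pairwise distinct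
reductions, `Q₁,Q₂,Q₃ ∈ P¹(L)` have pairwise distinct reductions, and
`φ ∈ PGL₂(L)` satisfies `φ(Pᵢ) = Qᵢ` for `i = 1,2,3`, then `φ ∈ PGL₂(O)`, i.e. `φ` is
induced by a matrix over `O` with unit determinant. -/
theorem mobius_good_reduction_of_three_points
    (L : Type*) [Field L] (O : ValuationSubring L) [IsDiscreteValuationRing ↥O]
    (P Q : Fin 3 → ProjLine L)
    (hP : ∀ i j, i ≠ j → ProjLine.red O (P i) ≠ ProjLine.red O (P j))
    (hQ : ∀ i j, i ≠ j → ProjLine.red O (Q i) ≠ ProjLine.red O (Q j))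
    (M : Matrix (Fin 2) (Fin 2) L) (hM : M.det ≠ 0)
    (hmap : ∀ i, ProjLine.mobius M (P i) = Q i) :
    ∃ N : Matrix (Fin 2) (Fin 2) ↥O, IsUnit N.det ∧
      ∀ x : ProjLine L,
        ProjLine.mobius (N.map (fun r : ↥O => (r : L))) x = ProjLine.mobius M x :=
  mobius_good_reduction_of_three_points_general L O P Q hP hQ M hM hmap

end
end

section
/- Let K be a field, and let f, g : P^1_K → P^1_K be rational maps (morphisms), each of degree d ≥ 1. Suppose that ∑_{P ∈ P^1(K), f(P)=g(P)} min{e_f(P), e_g(P)} ≥ 2d+1. Then f = g. -/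
open Polynomial
open scoped Classical

noncomputable section
open Polynomial

/-!
Write `f = p/q` and `g = r/s` and let `W = p s - q r`, a binary form of degree `2d`. Wherever
`f` and `g` agree, `W` vanishes to order at least `min (e_f P) (e_g P)`, since `W` is, up to
units, a combination of the local expansions of `f - f(P)` and `g - g(P)`. A nonzero binary
form of degree `2d` has at most `2d` zeros on `P¹` counted with multiplicity, so `W = 0`; and
then `f = g` because neither `(p, q)` nor `(r, s)` has a common zero on `P¹`.
-/

namespace Polynomial

variable {L : Type*} [Field L] {p q r s : L[X]}

lemma sum_rootMultiplicity_le_natDegree (W : L[X]) (T : Finset L) :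
    ∑ x ∈ T, rootMultiplicity x W ≤ W.natDegree :=
  calc ∑ x ∈ T, rootMultiplicity x W = ∑ x ∈ T, W.roots.count x := by
        simp only [count_roots]
    _ ≤ ∑ x ∈ T ∪ W.roots.toFinset, W.roots.count x :=
      Finset.sum_le_sum_of_subset Finset.subset_union_left
    _ = Multiset.card W.roots := Multiset.sum_count_eq_card fun _ ha ↦
        Finset.mem_union_right _ (Multiset.mem_toFinset.mpr ha)
    _ ≤ W.natDegree := card_roots' W

lemma rootMultiplicity_zero_reflect_le {W : L[X]} {n : ℕ} (hW : W ≠ 0)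
    (hn : W.natDegree ≤ n) : rootMultiplicity 0 (W.reflect n) ≤ n - W.natDegree := by
  rw [rootMultiplicity_le_iff (by rwa [Ne, reflect_eq_zero_iff]), map_zero, sub_zero]
  intro hdvd
  have hcoeff := X_pow_dvd_iff.mp hdvd (n - W.natDegree) (Nat.lt_succ_self _)
  rw [coeff_reflect, revAt_le (by omega), Nat.sub_sub_self hn] at hcoeff
  exact leadingCoeff_ne_zero.mpr hW hcoeff

lemma eval_zero_reflect (p : L[X]) (d : ℕ) : (p.reflect d).eval 0 = p.coeff d := by
  rw [← coeff_zero_eq_eval_zero, coeff_reflect, revAt_le (Nat.zero_le d), Nat.sub_zero]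

lemma natDegree_mul_sub_mul_le {d : ℕ} (hp : p.natDegree ≤ d) (hq : q.natDegree ≤ d)
    (hr : r.natDegree ≤ d) (hs : s.natDegree ≤ d) : (p * s - q * r).natDegree ≤ 2 * d :=
  (natDegree_sub_le _ _).trans <| max_le
    (natDegree_mul_le.trans (by omega)) (natDegree_mul_le.trans (by omega))

lemma reflect_mul_sub_mul {d : ℕ} (hp : p.natDegree ≤ d) (hq : q.natDegree ≤ d)
    (hr : r.natDegree ≤ d) (hs : s.natDegree ≤ d) :
    (p * s - q * r).reflect (2 * d) = p.reflect d * s.reflect d - q.reflect d * r.reflect d := by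
  rw [reflect_sub, two_mul, reflect_mul p s hp hs, reflect_mul q r hq hr]

lemma coeff_ne_zero_or_of_isCoprime_of_natDegree_eq {d : ℕ} (h : IsCoprime p q)
    (hp : p.natDegree = d) : p.coeff d ≠ 0 ∨ q.coeff d ≠ 0 := by
  by_cases hp0 : p = 0
  · subst hp0
    obtain ⟨c, hc, rfl⟩ := isUnit_iff.mp (isCoprime_zero_left.mp h)
    right
    rw [← hp, natDegree_zero, coeff_C_zero]
    exact hc.ne_zero
  · left
    rw [← hp]
    exact leadingCoeff_ne_zero.mpr hp0

end Polynomial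

lemma IsRatMapOfDeg.coeff_ne_zero_or {L : Type*} [Field L] {d : ℕ} {p q : L[X]}
    (hf : IsRatMapOfDeg d p q) : p.coeff d ≠ 0 ∨ q.coeff d ≠ 0 := by
  obtain ⟨hco, -, -, hp | hq⟩ := hf
  · exact coeff_ne_zero_or_of_isCoprime_of_natDegree_eq hco hp
  · exact (coeff_ne_zero_or_of_isCoprime_of_natDegree_eq hco.symm hq).symm

namespace ProjLine

variable {L : Type*} [Field L] {p q r s : L[X]}

/-- Vanishing order at `P` of the binary form of degree `n` whose dehomogenization is `W`. -/
def formOrd (n : ℕ) (W : L[X]) : ProjLine L → ℕ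
  | some x => rootMultiplicity x W
  | none => rootMultiplicity 0 (W.reflect n)

lemma sum_formOrd_le {W : L[X]} {n : ℕ} (hW : W ≠ 0) (hn : W.natDegree ≤ n)
    (T : Finset (ProjLine L)) : ∑ P ∈ T, formOrd n W P ≤ n :=
  calc ∑ P ∈ T, formOrd n W P
      ≤ ∑ P ∈ Finset.insertNone (Finset.eraseNone T), formOrd n W P := by
        rw [Finset.insertNone_eraseNone]
        exact Finset.sum_le_sum_of_subset (Finset.subset_insert _ _)
    _ = rootMultiplicity 0 (W.reflect n) + ∑ x ∈ Finset.eraseNone T, rootMultiplicity x W :=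
      Finset.sum_insertNone _ _
    _ ≤ (n - W.natDegree) + W.natDegree :=
      add_le_add (rootMultiplicity_zero_reflect_le hW hn) (sum_rootMultiplicity_le_natDegree W _)
    _ = n := Nat.sub_add_cancel hn

lemma eval_mul_sub_mul_eq_zero_of_evalAt_eq {x : L} (h : evalAt p q x = evalAt r s x) :
    (p * s - q * r).eval x = 0 := by
  unfold evalAt at h
  by_cases hq : q.eval x = 0 <;> by_cases hs : s.eval x = 0 <;> simp [hq, hs] at h ⊢
  rw [div_eq_div_iff hq hs] at h
  linear_combination h

lemma evalAt_eq_of_eval_mul_sub_mul_eq_zero {x : L} (hpq : p.eval x ≠ 0 ∨ q.eval x ≠ 0)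
    (hrs : r.eval x ≠ 0 ∨ s.eval x ≠ 0) (h : (p * s - q * r).eval x = 0) :
    evalAt p q x = evalAt r s x := by
  rw [eval_sub, eval_mul, eval_mul, sub_eq_zero] at h
  unfold evalAt
  by_cases hq : q.eval x = 0 <;> by_cases hs : s.eval x = 0
  · simp [hq, hs]
  · simp only [hq, zero_mul] at h
    exact absurd h (mul_ne_zero (hpq.resolve_right (not_not.mpr hq)) hs)
  · simp only [hs, mul_zero] at h
    exact absurd h.symm (mul_ne_zero hq (hrs.resolve_right (not_not.mpr hs)))
  · simp only [if_neg hq, if_neg hs, Option.some.injEq, div_eq_div_iff hq hs]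
    linear_combination h

lemma min_ramAt_le_rootMultiplicity_mul_sub_mul {x : L} (hW : p * s - q * r ≠ 0)
    (h : evalAt p q x = evalAt r s x) :
    min (ramAt p q x) (ramAt r s x) ≤ rootMultiplicity x (p * s - q * r) := by
  rw [le_rootMultiplicity_iff hW]
  unfold evalAt at h
  unfold ramAt
  by_cases hq : q.eval x = 0 <;> by_cases hs : s.eval x = 0 <;>
    simp only [hq, hs, if_true, if_false, reduceCtorEq] at h ⊢
  · have h1 : (X - C x) ^ min (rootMultiplicity x q) (rootMultiplicity x s) ∣ q :=
      (pow_dvd_pow _ (min_le_left _ _)).trans (pow_rootMultiplicity_dvd q x)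
    have h2 : (X - C x) ^ min (rootMultiplicity x q) (rootMultiplicity x s) ∣ s :=
      (pow_dvd_pow _ (min_le_right _ _)).trans (pow_rootMultiplicity_dvd s x)
    exact dvd_sub (h2.mul_left p) (h1.mul_right r)
  · set A := C (q.eval x) * p - C (p.eval x) * q
    set B := C (s.eval x) * r - C (r.eval x) * s
    have h1 : (X - C x) ^ min (rootMultiplicity x A) (rootMultiplicity x B) ∣ A :=
      (pow_dvd_pow _ (min_le_left _ _)).trans (pow_rootMultiplicity_dvd A x)
    have h2 : (X - C x) ^ min (rootMultiplicity x A) (rootMultiplicity x B) ∣ B :=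
      (pow_dvd_pow _ (min_le_right _ _)).trans (pow_rootMultiplicity_dvd B x)
    have hx : C (p.eval x) * C (s.eval x) = C (q.eval x) * C (r.eval x) := by
      rw [← C_mul, ← C_mul, (div_eq_div_iff hq hs).mp (Option.some.inj h), mul_comm]
    -- `p(x) s(x) = q(x) r(x)` cancels the constant terms of `A` and `B`.
    have key : C (s.eval x) * s * A - C (q.eval x) * q * B
        = C (q.eval x * s.eval x) * (p * s - q * r) := by
      rw [C_mul]
      linear_combination (-(q * s)) * hx
    refine (isUnit_C.mpr (mul_ne_zero hq hs).isUnit).dvd_mul_left.mp ?_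
    rw [← key]
    exact dvd_sub (h1.mul_left _) (h2.mul_left _)

lemma min_ram_le_formOrd {d : ℕ} (hp : p.natDegree ≤ d) (hq : q.natDegree ≤ d)
    (hr : r.natDegree ≤ d) (hs : s.natDegree ≤ d) (hW : p * s - q * r ≠ 0) {P : ProjLine L}
    (h : eval d p q P = eval d r s P) :
    min (ram d p q P) (ram d r s P) ≤ formOrd (2 * d) (p * s - q * r) P := by
  cases P with
  | some x => exact min_ramAt_le_rootMultiplicity_mul_sub_mul hW h
  | none =>
    have hW' := (reflect_eq_zero_iff (N := 2 * d)).not.mpr hW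
    rw [reflect_mul_sub_mul hp hq hr hs] at hW'
    rw [formOrd, reflect_mul_sub_mul hp hq hr hs]
    exact min_ramAt_le_rootMultiplicity_mul_sub_mul hW' h

lemma finite_setOf_eval_eq {d : ℕ} (hW : p * s - q * r ≠ 0) :
    {P : ProjLine L | eval d p q P = eval d r s P}.Finite := by
  refine (((finite_setOfPred_isRoot hW).image some).insert none).subset ?_
  rintro (_ | x) h
  · exact Set.mem_insert _ _
  · exact Set.mem_insert_of_mem _ ⟨x, eval_mul_sub_mul_eq_zero_of_evalAt_eq h, rfl⟩

lemma eval_eq_of_mul_sub_mul_eq_zero {d : ℕ} (hf : IsRatMapOfDeg d p q)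
    (hg : IsRatMapOfDeg d r s) (hW : p * s - q * r = 0) (P : ProjLine L) :
    eval d p q P = eval d r s P := by
  cases P with
  | some x =>
    refine evalAt_eq_of_eval_mul_sub_mul_eq_zero ?_ ?_ (by rw [hW, eval_zero])
    · simpa only [coe_aeval_eq_eval] using aeval_ne_zero_of_isCoprime hf.1 x
    · simpa only [coe_aeval_eq_eval] using aeval_ne_zero_of_isCoprime hg.1 x
  | none =>
    refine evalAt_eq_of_eval_mul_sub_mul_eq_zero ?_ ?_ ?_
    · simpa only [eval_zero_reflect] using hf.coeff_ne_zero_or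
    · simpa only [eval_zero_reflect] using hg.coeff_ne_zero_or
    · rw [← reflect_mul_sub_mul hf.2.1 hf.2.2.1 hg.2.1 hg.2.2.1, hW, reflect_zero, eval_zero]

end ProjLine

theorem rational_maps_eq_of_high_order_agreement_general
    (F : Type*) [Field F] (d : ℕ)
    (p q r s : F[X]) (hf : IsRatMapOfDeg d p q) (hg : IsRatMapOfDeg d r s)
    (hsum : 2 * d + 1 ≤
      ∑ᶠ P ∈ {P : ProjLine F | ProjLine.eval d p q P = ProjLine.eval d r s P},
        min (ProjLine.ram d p q P) (ProjLine.ram d r s P)) :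
    ∀ P : ProjLine F, ProjLine.eval d p q P = ProjLine.eval d r s P := by
  by_cases hW : p * s - q * r = 0
  · exact ProjLine.eval_eq_of_mul_sub_mul_eq_zero hf hg hW
  obtain ⟨-, hp, hq, -⟩ := hf
  obtain ⟨-, hr, hs, -⟩ := hg
  have hfin := ProjLine.finite_setOf_eval_eq (d := d) hW
  rw [finsum_mem_eq_finite_toFinset_sum _ hfin] at hsum
  have : 2 * d + 1 ≤ 2 * d := calc
    2 * d + 1 ≤ _ := hsum
    _ ≤ ∑ P ∈ hfin.toFinset, ProjLine.formOrd (2 * d) (p * s - q * r) P :=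
      Finset.sum_le_sum fun P hP ↦
        ProjLine.min_ram_le_formOrd hp hq hr hs hW (hfin.mem_toFinset.mp hP)
    _ ≤ 2 * d := ProjLine.sum_formOrd_le hW (natDegree_mul_sub_mul_le hp hq hr hs) _
  omega

/-- **Lemma 3.5 (interpolation of rational maps).**  Let `f = [p : q]` and
`g = [r : s]` be degree-`d` morphisms of `P¹` over a field `F` with `d ≥ 1`.  If
`∑_{P ∈ P¹(F), f(P) = g(P)} min(e_f(P), e_g(P)) ≥ 2d + 1`, then `f = g`. -/
theorem rational_maps_eq_of_high_order_agreement
    (F : Type*) [Field F] (d : ℕ) (hd : 1 ≤ d)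
    (p q r s : F[X]) (hf : IsRatMapOfDeg d p q) (hg : IsRatMapOfDeg d r s)
    (hsum : 2 * d + 1 ≤
      ∑ᶠ P ∈ {P : ProjLine F | ProjLine.eval d p q P = ProjLine.eval d r s P},
        min (ProjLine.ram d p q P) (ProjLine.ram d r s P)) :
    ∀ P : ProjLine F, ProjLine.eval d p q P = ProjLine.eval d r s P :=
  rational_maps_eq_of_high_order_agreement_general F d p q r s hf hg hsum

end
end
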